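/- arXiv:1805.07583 — 2 statements merged into one kernel-verified Lean document; each statement's English description precedes it below -/
import Mathlib

section
/- Let K be a continuous Kleene algebra and let Y ⊆ K be a set of fixed points of ()∗ (i.e. ξ∗ = ξ for every ξ ∈ Y). Then (sSup Y)∗ is the least upper bound of Y among the fixed points of ()∗: ξ ≤ (sSup Y)∗ for every ξ ∈ Y, and for every π with π∗ = π, if ξ ≤ π for all ξ ∈ Y then (sSup Y)∗ ≤ π. (Proposition 3.3, complete case: the kernel of a continuous Kleene algebra is a complete join-semilattice) -/
open Computability

/-- A continuous Kleene algebra: a Kleene algebra whose underlying order is a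
complete lattice, whose multiplication preserves arbitrary joins in each
coordinate, and in which `a∗ = ⨆ n, a ^ n`. -/
class ContinuousKleeneAlgebra (K : Type*) extends KleeneAlgebra K, CompleteLattice K where
  mul_sSup : ∀ (a : K) (s : Set K), a * sSup s = ⨆ b ∈ s, a * b
  sSup_mul : ∀ (a : K) (s : Set K), sSup s * a = ⨆ b ∈ s, b * a
  kstar_eq_iSup_pow : ∀ a : K, a∗ = ⨆ n : ℕ, a ^ n

/-- Proposition 3.3 (complete case): in a continuous Kleene algebra, for any
set `Y` of fixed points of `()∗`, the element `(sSup Y)∗` is the least upper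
bound of `Y` among the fixed points of `()∗`. -/
theorem kernel_complete_join_semilattice {K : Type*} [ContinuousKleeneAlgebra K]
    (Y : Set K) (hY : ∀ ξ ∈ Y, ξ∗ = ξ) :
    (∀ ξ ∈ Y, ξ ≤ (sSup Y)∗) ∧
    (∀ π : K, π∗ = π → (∀ ξ ∈ Y, ξ ≤ π) → (sSup Y)∗ ≤ π) := by
  constructor
  · exact fun ξ hξ => (le_sSup hξ).trans le_kstar
  · intro π hπ hub
    calc (sSup Y)∗ ≤ π∗ := kstar_mono (sSup_le hub)
    _ = π := hπ
end

section
/- Let A be an idempotent semiring (a join-semilattice with bottom 0 and a monoid with unit 1, in which · preserves finite joins in each coordinate and 0 is an annihilator), let S be a partially ordered set, and let γ : A → S and e : S → A be monotone maps such that γ(a) ≤ ξ ↔ a ≤ e(ξ) for all a ∈ A, ξ ∈ S (Galois connection γ ⊣ e), and γ(e(ξ)) = ξ for all ξ ∈ S. Assume moreover: (H5) 1 ≤ e(ξ) and e(ξ)·e(ξ) ≤ e(ξ) for every ξ ∈ S; (H6) for all a, b ∈ A, a·b ≤ b implies e(γ(a))·b ≤ b, and b·a ≤ b implies b·e(γ(a))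 ≤ b. Define a∗ := e(γ(a)). Then ()∗ satisfies the Kleene algebra axioms: for all a, b ∈ A, 1 ⊔ a·a∗ ≤ a∗, 1 ⊔ a∗·a ≤ a∗, 1 ⊔ a∗·a∗ ≤ a∗, a·b ≤ b implies a∗·b ≤ b, and b·a ≤ b implies b·a∗ ≤ b. (Proposition 3.7, first part: H₊ is a Kleene algebra) -/
/-- Proposition 3.7 (first part): given an idempotent semiring `A`, a poset
`S`, and a Galois connection `γ ⊣ e` with `γ ∘ e = id` satisfying conditions
H5 and H6, the operation `a∗ := e (γ a)` satisfies the Kleene algebra axioms. -/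
theorem heterogeneous_to_kleene {A S : Type*} [IdemSemiring A] [PartialOrder S]
    (γ : A → S) (e : S → A) (hγ : Monotone γ) (he : Monotone e)
    (gc : GaloisConnection γ e) (retr : ∀ ξ : S, γ (e ξ) = ξ)
    (H5a : ∀ ξ : S, 1 ≤ e ξ) (H5b : ∀ ξ : S, e ξ * e ξ ≤ e ξ)
    (H6a : ∀ a b : A, a * b ≤ b → e (γ a) * b ≤ b)
    (H6b : ∀ a b : A, b * a ≤ b → b * e (γ a) ≤ b) :
    (∀ a : A, 1 ⊔ a * e (γ a) ≤ e (γ a)) ∧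
    (∀ a : A, 1 ⊔ e (γ a) * a ≤ e (γ a)) ∧
    (∀ a : A, 1 ⊔ e (γ a) * e (γ a) ≤ e (γ a)) ∧
    (∀ a b : A, a * b ≤ b → e (γ a) * b ≤ b) ∧
    (∀ a b : A, b * a ≤ b → b * e (γ a) ≤ b) := by
  have unit : ∀ a : A, a ≤ e (γ a) := fun a => gc.le_u le_rfl
  refine ⟨fun a => ?_, fun a => ?_, fun a => ?_, H6a, H6b⟩
  · exact sup_le (H5a _) (le_trans (mul_le_mul_left (unit a) _) (H5b _))
  · exact sup_le (H5a _) (le_trans (mul_le_mul_right (unit a) _) (H5b _))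
  · exact sup_le (H5a _) (H5b _)
end
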